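/- arXiv:2003.02469 — 6 statements merged into one kernel-verified Lean document; each statement's English description precedes it below -/
import Mathlib

section
/- Let θ₁, θ₂ ∈ ℝ^D be such that exp(⟨θᵢ, t(x)⟩ + k(x)) has finite positive integral with respect to μ for i = 1, 2, and let α ∈ (0,1) be such that the same holds for αθ₁ + (1−α)θ₂. Then the α-skewed Bhattacharyya coefficient satisfies ∫_X p_{θ₁}(x)^α p_{θ₂}(x)^{1−α} dμ(x) = exp(−J_{F,α}(θ₁:θ₂)), where J_{F,α}(θ₁:θ₂) := αF(θ₁) + (1−α)F(θ₂) − F(αθ₁ + (1−α)θ₂) is the α-skewed Jensen divergence of the cumulant F. -/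
open MeasureTheory Real

/-- The cumulant function (log-normalizer) of an exponential family with
sufficient statistic `t` and carrier term `k` with respect to measure `μ`. -/
noncomputable def cumulant {X : Type*} [MeasurableSpace X] (μ : Measure X) {D : ℕ}
    (t : X → Fin D → ℝ) (k : X → ℝ) (θ : Fin D → ℝ) : ℝ :=
  Real.log (∫ x, Real.exp ((∑ i, θ i * t x i) + k x) ∂μ)

/-- The density of an exponential family member with natural parameter `θ`. -/
noncomputable def expFamDensity {X : Type*} [MeasurableSpace X] (μ : Measure X) {D : ℕ}
    (t : X → Fin D → ℝ) (k : X → ℝ) (θ : Fin D → ℝ) (x : X) : ℝ :=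
  Real.exp ((∑ i, θ i * t x i) - cumulant μ t k θ + k x)

theorem skewedBhattacharyya_eq_exp_neg_skewJensen
    {X : Type*} [MeasurableSpace X] (μ : Measure X) (D : ℕ) (hD : 1 ≤ D)
    (t : X → Fin D → ℝ) (k : X → ℝ) (ht : Measurable t) (hk : Measurable k)
    (θ₁ θ₂ : Fin D → ℝ) (α : ℝ) (hα : α ∈ Set.Ioo (0:ℝ) 1)
    (h1 : Integrable (fun x => Real.exp ((∑ i, θ₁ i * t x i) + k x)) μ)
    (h1pos : 0 < ∫ x, Real.exp ((∑ i, θ₁ i * t x i) + k x) ∂μ)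
    (h2 : Integrable (fun x => Real.exp ((∑ i, θ₂ i * t x i) + k x)) μ)
    (h2pos : 0 < ∫ x, Real.exp ((∑ i, θ₂ i * t x i) + k x) ∂μ)
    (hmix : Integrable (fun x => Real.exp ((∑ i, (α • θ₁ + (1 - α) • θ₂) i * t x i) + k x)) μ)
    (hmixpos : 0 < ∫ x, Real.exp ((∑ i, (α • θ₁ + (1 - α) • θ₂) i * t x i) + k x) ∂μ) :
    ∫ x, (expFamDensity μ t k θ₁ x) ^ α * (expFamDensity μ t k θ₂ x) ^ (1 - α) ∂μ =
      Real.exp (-(α * cumulant μ t k θ₁ + (1 - α) * cumulant μ t k θ₂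
        - cumulant μ t k (α • θ₁ + (1 - α) • θ₂))) := by
  set F1 := cumulant μ t k θ₁
  set F2 := cumulant μ t k θ₂
  set Fm := cumulant μ t k (α • θ₁ + (1 - α) • θ₂)
  have key : ∀ x, (expFamDensity μ t k θ₁ x) ^ α * (expFamDensity μ t k θ₂ x) ^ (1 - α)
      = Real.exp (-(α * F1 + (1 - α) * F2)) *
        Real.exp ((∑ i, (α • θ₁ + (1 - α) • θ₂) i * t x i) + k x) := by
    intro x
    rw [expFamDensity, expFamDensity,
      Real.rpow_def_of_pos (Real.exp_pos _), Real.rpow_def_of_pos (Real.exp_pos _),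
      Real.log_exp, Real.log_exp, ← Real.exp_add, ← Real.exp_add]
    congr 1
    simp only [Pi.add_apply, Pi.smul_apply, smul_eq_mul, add_mul, Finset.sum_add_distrib,
      mul_assoc, ← Finset.mul_sum]
    ring
  simp only [key]
  rw [integral_const_mul, ← Real.exp_log hmixpos, ← Real.exp_add]
  congr 1
  have : Real.log (∫ x, Real.exp ((∑ i, (α • θ₁ + (1 - α) • θ₂) i * t x i) + k x) ∂μ) = Fm := rfl
  rw [this]; ring
end

section
/- Let θ₁, θ₂ ∈ ℝ^D be such that exp(⟨θᵢ, t(x)⟩ + k(x)) has finite positive integral with respect to μ for i = 1, 2, and such that the same holds for the midpoint (θ₁+θ₂)/2. Then for every point ω ∈ X, the Bhattacharyya coefficient admits the cumulant-free expression ∫_X √(p_{θ₁}(x) p_{θ₂}(x)) dμ(x) = √(p_{θ₁}(ω) p_{θ₂}(ω)) / p_{(θ₁+θ₂)/2}(ω). -/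
open MeasureTheory Real

theorem bhattacharyyaCoeff_cumulant_free
    {X : Type*} [MeasurableSpace X] (μ : Measure X) (D : ℕ) (hD : 1 ≤ D)
    (t : X → Fin D → ℝ) (k : X → ℝ) (ht : Measurable t) (hk : Measurable k)
    (θ₁ θ₂ : Fin D → ℝ)
    (h1 : Integrable (fun x => Real.exp ((∑ i, θ₁ i * t x i) + k x)) μ)
    (h1pos : 0 < ∫ x, Real.exp ((∑ i, θ₁ i * t x i) + k x) ∂μ)
    (h2 : Integrable (fun x => Real.exp ((∑ i, θ₂ i * t x i) + k x)) μ)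
    (h2pos : 0 < ∫ x, Real.exp ((∑ i, θ₂ i * t x i) + k x) ∂μ)
    (hmid : Integrable
      (fun x => Real.exp ((∑ i, (((1:ℝ)/2) • (θ₁ + θ₂)) i * t x i) + k x)) μ)
    (hmidpos : 0 < ∫ x, Real.exp ((∑ i, (((1:ℝ)/2) • (θ₁ + θ₂)) i * t x i) + k x) ∂μ) :
    ∀ ω : X,
      ∫ x, Real.sqrt (expFamDensity μ t k θ₁ x * expFamDensity μ t k θ₂ x) ∂μ =
        Real.sqrt (expFamDensity μ t k θ₁ ω * expFamDensity μ t k θ₂ ω) /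
          expFamDensity μ t k (((1:ℝ)/2) • (θ₁ + θ₂)) ω := by
  intro ω
  set F1 := cumulant μ t k θ₁ with hF1
  set F2 := cumulant μ t k θ₂ with hF2
  set Fm := cumulant μ t k (((1:ℝ)/2) • (θ₁ + θ₂)) with hFm
  have hsum : ∀ x, (∑ i, (((1:ℝ)/2) • (θ₁ + θ₂)) i * t x i)
      = ((∑ i, θ₁ i * t x i) + (∑ i, θ₂ i * t x i)) / 2 := by
    intro x
    rw [← Finset.sum_add_distrib, Finset.sum_div]
    refine Finset.sum_congr rfl fun i _ => ?_
    simp [Pi.smul_apply, Pi.add_apply]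
    ring
  have key : ∀ x, Real.sqrt (expFamDensity μ t k θ₁ x * expFamDensity μ t k θ₂ x)
      = Real.exp (-(F1+F2)/2) *
        Real.exp ((∑ i, (((1:ℝ)/2) • (θ₁ + θ₂)) i * t x i) + k x) := by
    intro x
    rw [expFamDensity, expFamDensity, ← Real.exp_add, ← Real.exp_half, hsum x, ← Real.exp_add]
    congr 1; ring
  have hint : ∫ x, Real.sqrt (expFamDensity μ t k θ₁ x * expFamDensity μ t k θ₂ x) ∂μ
      = Real.exp (-(F1+F2)/2) * Real.exp Fm := by
    simp only [key]
    rw [integral_const_mul, hFm, cumulant, Real.exp_log hmidpos]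
  rw [hint, key ω, expFamDensity]
  rw [← hFm, eq_div_iff (Real.exp_ne_zero _), mul_assoc, ← Real.exp_add, ← Real.exp_add,
    ← Real.exp_add]
  congr 1; ring
end

section
/- Let α ∈ (0,1) and let θ₁, θ₂ ∈ ℝ^D be such that exp(⟨θᵢ, t(x)⟩ + k(x)) has finite positive integral with respect to μ for i = 1, 2, and such that the same holds for θ̄_α := αθ₁ + (1−α)θ₂. Then for every point ω ∈ X, the α-skewed Bhattacharyya coefficient admits the cumulant-free expression ∫_X p_{θ₁}(x)^α p_{θ₂}(x)^{1−α} dμ(x) = p_{θ₁}(ω)^α p_{θ₂}(ω)^{1−α} / p_{θ̄_α}(ω). -/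
open MeasureTheory Real

theorem skewedBhattacharyyaCoeff_cumulant_free
    {X : Type*} [MeasurableSpace X] (μ : Measure X) (D : ℕ) (hD : 1 ≤ D)
    (t : X → Fin D → ℝ) (k : X → ℝ) (ht : Measurable t) (hk : Measurable k)
    (α : ℝ) (hα : α ∈ Set.Ioo (0:ℝ) 1) (θ₁ θ₂ : Fin D → ℝ)
    (h1 : Integrable (fun x => Real.exp ((∑ i, θ₁ i * t x i) + k x)) μ)
    (h1pos : 0 < ∫ x, Real.exp ((∑ i, θ₁ i * t x i) + k x) ∂μ)
    (h2 : Integrable (fun x => Real.exp ((∑ i, θ₂ i * t x i) + k x)) μ)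
    (h2pos : 0 < ∫ x, Real.exp ((∑ i, θ₂ i * t x i) + k x) ∂μ)
    (hmix : Integrable (fun x => Real.exp ((∑ i, (α • θ₁ + (1 - α) • θ₂) i * t x i) + k x)) μ)
    (hmixpos : 0 < ∫ x, Real.exp ((∑ i, (α • θ₁ + (1 - α) • θ₂) i * t x i) + k x) ∂μ) :
    ∀ ω : X,
      ∫ x, (expFamDensity μ t k θ₁ x) ^ α * (expFamDensity μ t k θ₂ x) ^ (1 - α) ∂μ =
        (expFamDensity μ t k θ₁ ω) ^ α * (expFamDensity μ t k θ₂ ω) ^ (1 - α) /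
          expFamDensity μ t k (α • θ₁ + (1 - α) • θ₂) ω := by
  intro ω
  set F1 := cumulant μ t k θ₁ with hF1
  set F2 := cumulant μ t k θ₂ with hF2
  set Fm := cumulant μ t k (α • θ₁ + (1 - α) • θ₂) with hFmdef
  have hexp : ∀ a b : ℝ, (Real.exp a) ^ b = Real.exp (a * b) := by
    intro a b
    rw [Real.rpow_def_of_pos (Real.exp_pos a), Real.log_exp]
  have hsum : ∀ x, (∑ i, (α • θ₁ + (1 - α) • θ₂) i * t x i)
      = α * (∑ i, θ₁ i * t x i) + (1 - α) * (∑ i, θ₂ i * t x i) := by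
    intro x
    simp [Finset.mul_sum, add_mul, Finset.sum_add_distrib, mul_assoc]
  have hpt : ∀ x, (expFamDensity μ t k θ₁ x) ^ α * (expFamDensity μ t k θ₂ x) ^ (1 - α)
      = Real.exp (-(α * F1) - (1 - α) * F2) *
        Real.exp ((∑ i, (α • θ₁ + (1 - α) • θ₂) i * t x i) + k x) := by
    intro x
    simp only [expFamDensity, ← hF1, ← hF2, hexp, ← Real.exp_add, hsum]
    congr 1
    ring
  have hFm : Real.exp Fm
      = ∫ x, Real.exp ((∑ i, (α • θ₁ + (1 - α) • θ₂) i * t x i) + k x) ∂μ := by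
    rw [hFmdef]
    exact Real.exp_log hmixpos
  have hL : ∫ x, (expFamDensity μ t k θ₁ x) ^ α * (expFamDensity μ t k θ₂ x) ^ (1 - α) ∂μ
      = Real.exp (-(α * F1) - (1 - α) * F2) * Real.exp Fm := by
    simp only [hpt]
    rw [integral_const_mul, hFm]
  rw [hL]
  simp only [expFamDensity, ← hF1, ← hF2, ← hFmdef, hexp, ← Real.exp_add,
    div_eq_mul_inv, ← Real.exp_neg, hsum ω]
  congr 1
  ring
end

section
/- Let Θ ⊆ ℝ^D be an open convex set, let F : Θ → ℝ be convex and differentiable, and let θ₁, θ₂ ∈ Θ. Then the normalized α-skewed Jensen divergence tends to a Bregman divergence as α → 0⁺: the function α ↦ (αF(θ₁) + (1−α)F(θ₂) − F(αθ₁ + (1−α)θ₂)) / (α(1−α)) tends, as α → 0 from the right, to B_F(θ₁:θ₂) := F(θ₁) − F(θ₂) − ⟨θ₁ − θ₂, ∇F(θ₂)⟩. -/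
open Filter Set

theorem skewJensen_div_tendsto_bregman
    (D : ℕ) (Θ : Set (Fin D → ℝ)) (hΘopen : IsOpen Θ) (hΘconv : Convex ℝ Θ)
    (F : (Fin D → ℝ) → ℝ) (hF : ConvexOn ℝ Θ F)
    (hdiff : ∀ θ ∈ Θ, DifferentiableAt ℝ F θ)
    (θ₁ θ₂ : Fin D → ℝ) (hθ₁ : θ₁ ∈ Θ) (hθ₂ : θ₂ ∈ Θ) :
    Tendsto
      (fun α : ℝ =>
        (α * F θ₁ + (1 - α) * F θ₂ - F (α • θ₁ + (1 - α) • θ₂)) / (α * (1 - α)))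
      (nhdsWithin 0 (Ioi 0))
      (nhds (F θ₁ - F θ₂ - fderiv ℝ F θ₂ (θ₁ - θ₂))) := by
  set L : ℝ := fderiv ℝ F θ₂ (θ₁ - θ₂) with hL
  set g : ℝ → ℝ := fun α => F (θ₂ + α • (θ₁ - θ₂)) with hgdef
  have hline : HasDerivAt (fun α : ℝ => θ₂ + α • (θ₁ - θ₂)) (θ₁ - θ₂) 0 := by
    simpa using ((hasDerivAt_id (0:ℝ)).smul_const (θ₁ - θ₂)).const_add θ₂
  have hF2 : HasFDerivAt F (fderiv ℝ F θ₂) ((fun α : ℝ => θ₂ + α • (θ₁ - θ₂)) 0) := by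
    simpa using (hdiff θ₂ hθ₂).hasFDerivAt
  have hg : HasDerivAt g L 0 := hF2.comp_hasDerivAt 0 hline
  have hslope : Tendsto (fun α : ℝ => (g α - F θ₂) / α)
      (nhdsWithin 0 (Ioi 0)) (nhds L) := by
    have h1 := hasDerivAt_iff_tendsto_slope.mp hg
    have h2 := h1.mono_left
      (nhdsWithin_mono 0 (fun x hx => ne_of_gt hx : Ioi (0:ℝ) ⊆ {0}ᶜ))
    refine h2.congr fun α => ?_
    simp [slope_def_field, hgdef, div_eq_inv_mul]
  have hmain : Tendsto
      (fun α : ℝ => ((F θ₁ - F θ₂) - (g α - F θ₂) / α) / (1 - α))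
      (nhdsWithin 0 (Ioi 0)) (nhds ((F θ₁ - F θ₂ - L) / (1 - 0))) := by
    exact (tendsto_const_nhds.sub hslope).div
      (tendsto_const_nhds.sub (tendsto_id.mono_left nhdsWithin_le_nhds))
      (by norm_num)
  have hmem : Ioo (0:ℝ) 1 ∈ nhdsWithin 0 (Ioi 0) :=
    Ioo_mem_nhdsGT_of_mem (by norm_num : (0:ℝ) ∈ Ico (0:ℝ) 1)
  have heq : ∀ α ∈ Ioo (0:ℝ) 1,
      ((F θ₁ - F θ₂) - (g α - F θ₂) / α) / (1 - α)
        = (α * F θ₁ + (1 - α) * F θ₂ - F (α • θ₁ + (1 - α) • θ₂)) / (α * (1 - α)) := by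
    intro α hα
    have hpt : α • θ₁ + (1 - α) • θ₂ = θ₂ + α • (θ₁ - θ₂) := by
      simp [smul_sub, sub_smul]; abel
    rw [hpt]
    have hα0 : α ≠ 0 := ne_of_gt hα.1
    have hα1 : (1 : ℝ) - α ≠ 0 := ne_of_gt (sub_pos.mpr hα.2)
    field_simp [hgdef]
    ring
  have := hmain.congr' (by filter_upwards [hmem] with α hα using heq α hα)
  simpa using this
end

section
/- Let μ₁, μ₂ ∈ ℝ and σ₁, σ₂ > 0, and let φ_{μ,σ}(x) = (1/(σ√(2π))) exp(−(x−μ)²/(2σ²)) denote the univariate Gaussian density. Then the Kullback-Leibler divergence between the two Gaussians equals the average of the logarithms of density ratios at the two points ω₁ = μ₁ − σ₁ and ω₂ = μ₁ + σ₁: ∫_ℝ φ_{μ₁,σ₁}(x) log(φ_{μ₁,σ₁}(x)/φ_{μ₂,σ₂}(x)) dx = (1/2)(log(φ_{μ₁,σ₁}(μ₁−σ₁)/φ_{μ₂,σ₂}(μ₁−σ₁)) + log(φ_{μ₁,σ₁}(μ₁+σ₁)/φ_{μ₂,σ₂}(μ₁+σ₁))). -/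
open MeasureTheory Real

/-- The univariate Gaussian density with mean `m` and standard deviation `s`. -/
noncomputable def gaussDensity (m s x : ℝ) : ℝ :=
  (1 / (s * Real.sqrt (2 * Real.pi))) * Real.exp (-(x - m) ^ 2 / (2 * s ^ 2))

lemma integrable_sq_mul_exp {b : ℝ} (hb : 0 < b) :
    Integrable fun x : ℝ => x ^ 2 * Real.exp (-b * x ^ 2) := by
  have h := integrable_rpow_mul_exp_neg_mul_sq hb (s := 2) (by norm_num)
  have he : (fun x : ℝ => x ^ (2 : ℝ) * Real.exp (-b * x ^ 2)) =
      fun x : ℝ => x ^ 2 * Real.exp (-b * x ^ 2) := by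
    funext x
    rw [show (2 : ℝ) = ((2 : ℕ) : ℝ) by norm_num, Real.rpow_natCast]
  rwa [he] at h

lemma integral_mul_exp_eq_zero {b : ℝ} (hb : 0 < b) :
    ∫ x : ℝ, x * Real.exp (-b * x ^ 2) = 0 := by
  have hderiv : ∀ x : ℝ, HasDerivAt (fun x : ℝ => Real.exp (-b * x ^ 2))
      ((-2 * b) * (x * Real.exp (-b * x ^ 2))) x := by
    intro x
    have h := ((hasDerivAt_pow 2 x).const_mul (-b)).exp
    convert h using 1
    ring
  have hint : Integrable fun x : ℝ => (-2 * b) * (x * Real.exp (-b * x ^ 2)) :=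
    (integrable_mul_exp_neg_mul_sq hb).const_mul _
  have key := integral_eq_zero_of_hasDerivAt_of_integrable hderiv hint
    (integrable_exp_neg_mul_sq hb)
  rw [integral_const_mul] at key
  have hb2 : (-2 : ℝ) * b ≠ 0 := mul_ne_zero (by norm_num) hb.ne'
  exact (mul_eq_zero.1 key).resolve_left hb2

lemma integral_sq_mul_exp {b : ℝ} (hb : 0 < b) :
    ∫ x : ℝ, x ^ 2 * Real.exp (-b * x ^ 2) = Real.sqrt (π / b) / (2 * b) := by
  have hderiv : ∀ x : ℝ, HasDerivAt (fun x : ℝ => x * Real.exp (-b * x ^ 2))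
      (Real.exp (-b * x ^ 2) - (2 * b) * (x ^ 2 * Real.exp (-b * x ^ 2))) x := by
    intro x
    have h : HasDerivAt (fun x : ℝ => x * Real.exp (-b * x ^ 2)) _ x :=
      (hasDerivAt_id x).mul ((hasDerivAt_pow 2 x).const_mul (-b)).exp
    convert h using 1
    simp only [id_eq]
    ring
  have hint : Integrable fun x : ℝ =>
      Real.exp (-b * x ^ 2) - (2 * b) * (x ^ 2 * Real.exp (-b * x ^ 2)) :=
    (integrable_exp_neg_mul_sq hb).sub ((integrable_sq_mul_exp hb).const_mul _)
  have key := integral_eq_zero_of_hasDerivAt_of_integrable hderiv hint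
    (integrable_mul_exp_neg_mul_sq hb)
  rw [integral_sub (integrable_exp_neg_mul_sq hb)
    ((integrable_sq_mul_exp hb).const_mul _), integral_const_mul,
    integral_gaussian] at key
  have hb' : (2 : ℝ) * b ≠ 0 := by positivity
  rw [eq_div_iff hb']
  linarith [key]

lemma moment_combo {b : ℝ} (hb : 0 < b) (d₀ d₁ d₂ : ℝ) :
    ∫ y : ℝ, Real.exp (-b * y ^ 2) * (d₀ + d₁ * y + d₂ * y ^ 2) =
      d₀ * Real.sqrt (π / b) + d₂ * (Real.sqrt (π / b) / (2 * b)) := by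
  have hfun : (fun y : ℝ => Real.exp (-b * y ^ 2) * (d₀ + d₁ * y + d₂ * y ^ 2)) =
      fun y : ℝ => (d₀ * Real.exp (-b * y ^ 2) + d₁ * (y * Real.exp (-b * y ^ 2)))
        + d₂ * (y ^ 2 * Real.exp (-b * y ^ 2)) := by
    funext y; ring
  have i0 : Integrable fun y : ℝ => d₀ * Real.exp (-b * y ^ 2) :=
    (integrable_exp_neg_mul_sq hb).const_mul _
  have i1 : Integrable fun y : ℝ => d₁ * (y * Real.exp (-b * y ^ 2)) :=
    (integrable_mul_exp_neg_mul_sq hb).const_mul _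
  have i2 : Integrable fun y : ℝ => d₂ * (y ^ 2 * Real.exp (-b * y ^ 2)) :=
    (integrable_sq_mul_exp hb).const_mul _
  have i01 : Integrable fun y : ℝ =>
      d₀ * Real.exp (-b * y ^ 2) + d₁ * (y * Real.exp (-b * y ^ 2)) := i0.add i1
  rw [hfun, integral_add i01 i2, integral_add i0 i1, integral_const_mul,
    integral_const_mul, integral_const_mul, integral_gaussian,
    integral_mul_exp_eq_zero hb, integral_sq_mul_exp hb]
  ring

lemma gauss_poly (m s : ℝ) (hs : 0 < s) (c₀ c₁ c₂ : ℝ) :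
    ∫ x : ℝ, gaussDensity m s x * (c₀ + c₁ * x + c₂ * x ^ 2) =
      c₀ + c₁ * m + c₂ * (m ^ 2 + s ^ 2) := by
  have hb : (0 : ℝ) < (2 * s ^ 2)⁻¹ := by positivity
  have hπ : (0 : ℝ) < Real.sqrt (2 * π) := Real.sqrt_pos.2 (by positivity)
  have htrans := integral_add_right_eq_self (μ := volume)
    (fun x : ℝ => gaussDensity m s x * (c₀ + c₁ * x + c₂ * x ^ 2)) m
  rw [← htrans]
  have hfun : (fun y : ℝ => gaussDensity m s (y + m) * (c₀ + c₁ * (y + m) + c₂ * (y + m) ^ 2)) =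
      fun y : ℝ => (1 / (s * Real.sqrt (2 * π))) *
        (Real.exp (-(2 * s ^ 2)⁻¹ * y ^ 2) *
          ((c₀ + c₁ * m + c₂ * m ^ 2) + (c₁ + 2 * c₂ * m) * y + c₂ * y ^ 2)) := by
    funext y
    have hexp : Real.exp (-(y + m - m) ^ 2 / (2 * s ^ 2)) =
        Real.exp (-(2 * s ^ 2)⁻¹ * y ^ 2) := by
      congr 1
      field_simp
      ring
    simp only [gaussDensity, hexp]
    ring
  rw [hfun, integral_const_mul, moment_combo hb]
  have hsq : Real.sqrt (π / (2 * s ^ 2)⁻¹) = s * Real.sqrt (2 * π) := by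
    rw [show π / (2 * s ^ 2)⁻¹ = (2 * π) * s ^ 2 by field_simp,
      Real.sqrt_mul (by positivity), Real.sqrt_sq hs.le]
    ring
  rw [hsq]
  field_simp
  ring

theorem kl_gaussian_eq_average_two_log_ratios
    (μ₁ μ₂ : ℝ) (σ₁ σ₂ : ℝ) (h₁ : 0 < σ₁) (h₂ : 0 < σ₂) :
    ∫ x : ℝ, gaussDensity μ₁ σ₁ x *
        Real.log (gaussDensity μ₁ σ₁ x / gaussDensity μ₂ σ₂ x) =
      (1 / 2) *
        (Real.log (gaussDensity μ₁ σ₁ (μ₁ - σ₁) / gaussDensity μ₂ σ₂ (μ₁ - σ₁)) +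
          Real.log (gaussDensity μ₁ σ₁ (μ₁ + σ₁) / gaussDensity μ₂ σ₂ (μ₁ + σ₁))) := by
  have hπ : (0 : ℝ) < Real.sqrt (2 * π) := Real.sqrt_pos.2 (by positivity)
  set c₂ : ℝ := 1 / (2 * σ₂ ^ 2) - 1 / (2 * σ₁ ^ 2) with hc₂
  set c₁ : ℝ := μ₁ / σ₁ ^ 2 - μ₂ / σ₂ ^ 2 with hc₁
  set c₀ : ℝ := Real.log (σ₂ * Real.sqrt (2 * π)) - Real.log (σ₁ * Real.sqrt (2 * π))
      + μ₂ ^ 2 / (2 * σ₂ ^ 2) - μ₁ ^ 2 / (2 * σ₁ ^ 2) with hc₀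
  have hlog : ∀ x : ℝ, Real.log (gaussDensity μ₁ σ₁ x / gaussDensity μ₂ σ₂ x) =
      c₀ + c₁ * x + c₂ * x ^ 2 := by
    intro x
    have hp1 : (0 : ℝ) < gaussDensity μ₁ σ₁ x := by
      unfold gaussDensity; positivity
    have hp2 : (0 : ℝ) < gaussDensity μ₂ σ₂ x := by
      unfold gaussDensity; positivity
    rw [Real.log_div hp1.ne' hp2.ne']
    unfold gaussDensity
    rw [Real.log_mul (by positivity) (Real.exp_pos _).ne',
      Real.log_mul (by positivity) (Real.exp_pos _).ne',
      Real.log_exp, Real.log_exp, one_div, Real.log_inv, one_div, Real.log_inv,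
      hc₀, hc₁, hc₂]
    field_simp
    ring
  simp_rw [hlog]
  rw [gauss_poly μ₁ σ₁ h₁ c₀ c₁ c₂]
  ring
end

section
/- For all shape parameters α₁, α₂ > 0 and rate parameters β₁, β₂ > 0, the Bhattacharyya coefficient between the two Gamma densities p_{α₁,β₁} and p_{α₂,β₂} equals ∫_0^∞ √(p_{α₁,β₁}(x) p_{α₂,β₂}(x)) dx = √(β₁^{α₁} β₂^{α₂} / (Γ(α₁) Γ(α₂))) · Γ(ᾱ) · β̄^{−ᾱ}, where ᾱ = (α₁+α₂)/2, β̄ = (β₁+β₂)/2, and Γ is the Euler Gamma function. -/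
open MeasureTheory Real Set

/-- The Gamma density with shape `a > 0` and rate `b > 0`. -/
noncomputable def gammaDensity (a b x : ℝ) : ℝ :=
  (b ^ a / Real.Gamma a) * x ^ (a - 1) * Real.exp (-b * x)

theorem bhattacharyyaCoeff_gamma
    (α₁ α₂ β₁ β₂ : ℝ) (hα₁ : 0 < α₁) (hα₂ : 0 < α₂) (hβ₁ : 0 < β₁) (hβ₂ : 0 < β₂) :
    ∫ x in Ioi (0:ℝ), Real.sqrt (gammaDensity α₁ β₁ x * gammaDensity α₂ β₂ x) =
      Real.sqrt (β₁ ^ α₁ * β₂ ^ α₂ / (Real.Gamma α₁ * Real.Gamma α₂)) *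
        Real.Gamma ((α₁ + α₂) / 2) * ((β₁ + β₂) / 2) ^ (-((α₁ + α₂) / 2)) := by
  have hβ : (0:ℝ) < (β₁ + β₂) / 2 := by linarith
  have hα : (0:ℝ) < (α₁ + α₂) / 2 := by linarith
  have hstep : ∀ x ∈ Ioi (0:ℝ),
      Real.sqrt (gammaDensity α₁ β₁ x * gammaDensity α₂ β₂ x) =
      Real.sqrt (β₁ ^ α₁ * β₂ ^ α₂ / (Real.Gamma α₁ * Real.Gamma α₂)) *
        (x ^ ((α₁ + α₂) / 2 - 1) * Real.exp (-((β₁ + β₂) / 2 * x))) := by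
    intro x hx
    have hx : (0:ℝ) < x := hx
    have hG₁ := Real.Gamma_pos_of_pos hα₁
    have hG₂ := Real.Gamma_pos_of_pos hα₂
    have h1 : gammaDensity α₁ β₁ x * gammaDensity α₂ β₂ x =
        (β₁ ^ α₁ * β₂ ^ α₂ / (Real.Gamma α₁ * Real.Gamma α₂)) *
        (x ^ (α₁ - 1) * x ^ (α₂ - 1) * Real.exp (-β₁ * x + -β₂ * x)) := by
      rw [Real.exp_add]; unfold gammaDensity; ring
    rw [h1, Real.sqrt_mul (by positivity), Real.sqrt_mul (by positivity),
      ← Real.rpow_add hx]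
    have hxs : Real.sqrt (x ^ (α₁ - 1 + (α₂ - 1))) = x ^ ((α₁ + α₂) / 2 - 1) := by
      rw [Real.sqrt_eq_rpow, ← Real.rpow_mul hx.le]
      ring_nf
    have hsq : Real.sqrt (Real.exp (-β₁ * x + -β₂ * x)) =
        Real.exp (-((β₁ + β₂) / 2 * x)) := by
      rw [Real.sqrt_eq_rpow, ← Real.exp_one_rpow (-β₁ * x + -β₂ * x),
        ← Real.rpow_mul (Real.exp_pos 1).le, Real.exp_one_rpow]
      ring_nf
    rw [hxs, hsq]
  rw [setIntegral_congr_fun measurableSet_Ioi hstep, integral_const_mul,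
    integral_rpow_mul_exp_neg_mul_Ioi hα hβ]
  rw [one_div, Real.inv_rpow hβ.le, ← Real.rpow_neg hβ.le]
  ring
end
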